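/- Under the gyration H_Γ of Lemma 'connect-preserv': if two degree-2 vertices v₁, v₂ are endpoints of a black path in φ, then they are endpoints of a black path in H_Γ(φ); the same holds for white paths. Hence H_Γ preserves the black and white endpoint pairings (π_b, π_w) of a fully-packed loop configuration, and preserves the total number ℓ of monochromatic cycles. -/

import Mathlib

open Finset

variable {V E : Type*} [Fintype V] [Fintype E] [DecidableEq V] [DecidableEq E]

/-- Multiplicity with which an edge `e` is incident to the vertex `v`. -/
def emult (ends : E → Sym2 V) (e : E) (v : V) : ℕ :=
  if ends e = s(v, v) then 2 else if v ∈ ends e then 1 else 0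

/-- Degree of a vertex. -/
def vdeg (ends : E → Sym2 V) (v : V) : ℕ := ∑ e : E, emult ends e v

/-- Black degree of a vertex under a 2-coloring `c` (`true` = black). -/
def bdeg (ends : E → Sym2 V) (c : E → Bool) (v : V) : ℕ :=
  ∑ e : E, if c e then emult ends e v else 0

/-- Degree of a vertex within a set `S` of edges. -/
def gdeg (ends : E → Sym2 V) (S : Finset E) (v : V) : ℕ := ∑ e ∈ S, emult ends e v

/-- Black degree of a vertex within a set `S` of edges. -/
def gbdeg (ends : E → Sym2 V) (c : E → Bool) (S : Finset E) (v : V) : ℕ :=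
  ∑ e ∈ S, if c e then emult ends e v else 0

/-- A fully-packed loop configuration. -/
def IsFPL (ends : E → Sym2 V) (c : E → Bool) : Prop :=
  ∀ v : V, (vdeg ends v = 4 → bdeg ends c v = 2) ∧ (vdeg ends v = 2 → bdeg ends c v = 1)

/-- Alternating coloring on a cycle. -/
def AltOn (ends : E → Sym2 V) (c : E → Bool) (S : Finset E) : Prop :=
  ∀ v : V, gdeg ends S v = 2 → gbdeg ends c S v = 1

instance (ends : E → Sym2 V) (c : E → Bool) (S : Finset E) : Decidable (AltOn ends c S) := by
  unfold AltOn; infer_instance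

/-- The gyration `H_Γ` associated to a cycle decomposition `cls` and a marking
`punct` of punctured cycles. -/
def gyr (ends : E → Sym2 V) (cls : E → Finset E) (punct : Finset E → Bool)
    (c : E → Bool) : E → Bool :=
  fun e =>
    if ((cls e).card = 4 ∨ ((cls e).card = 2 ∧ punct (cls e) = true)) ∧ AltOn ends c (cls e)
    then c e else !(c e)

/-- The monochromatic subgraph of color `b` of a coloring `c`. -/
def monoGraph (ends : E → Sym2 V) (c : E → Bool) (b : Bool) : SimpleGraph V where
  Adj v w := v ≠ w ∧ ∃ e, c e = b ∧ ends e = s(v, w)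
  symm := by
    constructor
    rintro v w ⟨hvw, e, he, hee⟩
    exact ⟨hvw.symm, e, he, hee.trans (Sym2.eq_swap)⟩
  loopless := ⟨fun v h => h.1 rfl⟩

/-- The number of monochromatic cycles of color `b`: the number of connected
components of the monochromatic subgraph containing no degree-2 vertex (the
components containing degree-2 vertices are the open paths and the isolated
degree-2 vertices). -/
noncomputable def cycCount (ends : E → Sym2 V) (c : E → Bool) (b : Bool) : ℕ :=
  Nat.card {C : (monoGraph ends c b).ConnectedComponent //
    ∀ v ∈ C.supp, vdeg ends v ≠ 2}


/-!
Call a vertex *alternating* when each cycle of `Γ` through it carries exactly one black edge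
there; degree-2 vertices are alternating. At a non-alternating vertex (of degree 4) both cycles
fail to alternate, so gyration complements every edge there, and all black edges there lie in a
single cycle. Hence a black path between alternating vertices splits, at its alternating
vertices, into black segments each inside one cycle. A kept cycle leaves its segments intact; on
a complemented cycle of length at most four the two ends of a segment are the only vertices with
exactly one black edge of the cycle, so the handshake lemma joins them through the formerly white
edges. Gyration is an involution, which gives the converse, and complementing all colours gives
the white case. For the loop count, components through alternating vertices correspond through
their alternating vertices, while the components avoiding them keep their vertex sets and swap
colours.
-/

def edgeGraph (ends : E → Sym2 V) (T : Finset E) : SimpleGraph V :=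
  SimpleGraph.fromEdgeSet (ends '' T)

abbrev Kept (ends : E → Sym2 V) (punct : Finset E → Bool) (c : E → Bool) (S : Finset E) :
    Prop :=
  (S.card = 4 ∨ (S.card = 2 ∧ punct S = true)) ∧ AltOn ends c S

-- For a fully-packed configuration: the degree-2 vertices, and the degree-4 vertices at which
-- a black path passes from one cycle of `Γ` to the other.
def AltAt (ends : E → Sym2 V) (cls : E → Finset E) (c : E → Bool) (v : V) : Prop :=
  ∀ e, gdeg ends (cls e) v = 2 → gbdeg ends c (cls e) v = 1

section

omit [Fintype V] [Fintype E] [DecidableEq V] [DecidableEq E]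

lemma exists_ends_eq (ends : E → Sym2 V) (e : E) : ∃ x y, ends e = s(x, y) :=
  Sym2.ind (f := fun z => ∃ x y, z = s(x, y)) (fun x y => ⟨x, y, rfl⟩) (ends e)

section Degree

variable [DecidableEq V] {ends : E → Sym2 V}

lemma emult_eq {e : E} {x y : V} (h : ends e = s(x, y)) (v : V) :
    emult ends e v = (if v = x then 1 else 0) + (if v = y then 1 else 0) := by
  unfold emult
  rw [h]
  by_cases hvx : v = x <;> by_cases hvy : v = y <;> simp [hvx, hvy] <;> grind

lemma emult_pos_left {e : E} {x y : V} (h : ends e = s(x, y)) : 0 < emult ends e x := by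
  simp [emult_eq h]

lemma emult_pos_right {e : E} {x y : V} (h : ends e = s(x, y)) : 0 < emult ends e y := by
  simp [emult_eq h]

lemma sum_emult_eq {e : E} {x y : V} (h : ends e = s(x, y)) (D : Finset V) :
    ∑ v ∈ D, emult ends e v = (if x ∈ D then 1 else 0) + (if y ∈ D then 1 else 0) := by
  simp [emult_eq h, sum_add_distrib]

lemma sum_gdeg [Fintype V] (S : Finset E) : ∑ v, gdeg ends S v = 2 * #S := by
  have h2 : ∀ e, ∑ v, emult ends e v = 2 := fun e => by
    obtain ⟨x, y, h⟩ := exists_ends_eq ends e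
    simp [sum_emult_eq h]
  simp only [gdeg]
  rw [sum_comm]
  simp [h2, mul_comm]

lemma gbdeg_eq_gdeg_filter (c : E → Bool) (S : Finset E) (v : V) :
    gbdeg ends c S v = gdeg ends (S.filter fun e => c e = true) v :=
  (sum_filter _ _).symm

lemma gbdeg_add_gbdeg_not (c : E → Bool) (S : Finset E) (v : V) :
    gbdeg ends c S v + gbdeg ends (fun e => !c e) S v = gdeg ends S v := by
  rw [gbdeg, gbdeg, ← sum_add_distrib]
  exact sum_congr rfl fun e _ => by cases c e <;> simp

lemma gbdeg_le_gdeg (c : E → Bool) (S : Finset E) (v : V) : gbdeg ends c S v ≤ gdeg ends S v :=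
  sum_le_sum fun e _ => by split_ifs <;> simp

lemma gbdeg_congr {c d : E → Bool} {S : Finset E} (h : ∀ e ∈ S, c e = d e) (v : V) :
    gbdeg ends c S v = gbdeg ends d S v :=
  sum_congr rfl fun e he => by rw [h e he]

lemma emult_le_gdeg {e : E} {S : Finset E} (he : e ∈ S) (v : V) :
    emult ends e v ≤ gdeg ends S v :=
  single_le_sum (f := fun e => emult ends e v) (fun _ _ => Nat.zero_le _) he

lemma emult_le_gbdeg {c : E → Bool} {e : E} {S : Finset E} (he : e ∈ S) (hc : c e = true)
    (v : V) : emult ends e v ≤ gbdeg ends c S v := by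
  rw [gbdeg_eq_gdeg_filter]
  exact emult_le_gdeg (mem_filter.2 ⟨he, hc⟩) v

lemma gdeg_union [DecidableEq E] {S T : Finset E} (h : Disjoint S T) (v : V) :
    gdeg ends (S ∪ T) v = gdeg ends S v + gdeg ends T v :=
  sum_union h

lemma gbdeg_union [DecidableEq E] (c : E → Bool) {S T : Finset E} (h : Disjoint S T) (v : V) :
    gbdeg ends c (S ∪ T) v = gbdeg ends c S v + gbdeg ends c T v :=
  sum_union h

lemma gdeg_le_vdeg [Fintype E] (S : Finset E) (v : V) : gdeg ends S v ≤ vdeg ends v :=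
  sum_le_sum_of_subset (subset_univ S)

lemma gbdeg_eq_bdeg_of_gdeg_eq_vdeg [Fintype E] [DecidableEq E] {c : E → Bool} {S : Finset E}
    {v : V} (h : gdeg ends S v = vdeg ends v) : gbdeg ends c S v = bdeg ends c v := by
  have hv : gdeg ends S v + gdeg ends Sᶜ v = vdeg ends v := sum_add_sum_compl S _
  have hb : gbdeg ends c S v + gbdeg ends c Sᶜ v = bdeg ends c v := sum_add_sum_compl S _
  have := gbdeg_le_gdeg (ends := ends) c Sᶜ v
  omega

end Degree

section EdgeGraph

variable {ends : E → Sym2 V}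

lemma edgeGraph_adj {T : Finset E} {v w : V} :
    (edgeGraph ends T).Adj v w ↔ v ≠ w ∧ ∃ e ∈ T, ends e = s(v, w) := by
  simp [edgeGraph, SimpleGraph.fromEdgeSet_adj, and_comm]

lemma edgeGraph_le_monoGraph {T : Finset E} {c : E → Bool} {b : Bool} (h : ∀ e ∈ T, c e = b) :
    edgeGraph ends T ≤ monoGraph ends c b := by
  intro v w hvw
  obtain ⟨hne, e, he, hends⟩ := edgeGraph_adj.1 hvw
  exact ⟨hne, e, h e he, hends⟩

variable [DecidableEq V]

lemma exists_emult_pos_of_reachable {T : Finset E} {x y : V}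
    (h : (edgeGraph ends T).Reachable x y) (hxy : x ≠ y) : ∃ e ∈ T, 0 < emult ends e y := by
  rw [SimpleGraph.reachable_iff_reflTransGen] at h
  rcases h.cases_tail with rfl | ⟨z, -, hzy⟩
  · exact absurd rfl hxy
  · obtain ⟨-, e, he, hends⟩ := edgeGraph_adj.1 hzy
    exact ⟨e, he, emult_pos_right hends⟩

lemma even_sum_gdeg_of_closed {T : Finset E} {D : Finset V}
    (hD : ∀ e ∈ T, ∀ x y, ends e = s(x, y) → (x ∈ D ↔ y ∈ D)) :
    Even (∑ v ∈ D, gdeg ends T v) := by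
  simp only [gdeg]
  rw [sum_comm]
  refine even_sum _ fun e he => ?_
  obtain ⟨x, y, h⟩ := exists_ends_eq ends e
  rw [sum_emult_eq h]
  simp only [hD e he x y h]
  split_ifs <;> decide

-- The handshake lemma, applied to the component of `u`.
theorem edgeGraph_reachable_of_odd [Fintype V] {T : Finset E} {u w : V} (huw : u ≠ w)
    (hu : Odd (gdeg ends T u)) (heven : ∀ v, v ≠ u → v ≠ w → Even (gdeg ends T v)) :
    (edgeGraph ends T).Reachable u w := by
  classical
  by_contra hne
  set D := univ.filter ((edgeGraph ends T).Reachable u ·)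
  have hclosed : ∀ e ∈ T, ∀ x y, ends e = s(x, y) → (x ∈ D ↔ y ∈ D) := by
    intro e he x y h
    rcases eq_or_ne x y with rfl | hxy
    · rfl
    have hadj : (edgeGraph ends T).Adj x y := edgeGraph_adj.2 ⟨hxy, e, he, h⟩
    simp only [D, mem_filter, mem_univ, true_and]
    exact ⟨fun h => h.trans hadj.reachable, fun h => h.trans hadj.symm.reachable⟩
  have hodd : {v ∈ D | Odd (gdeg ends T v)} = {u} := by
    ext v
    simp only [D, mem_filter, mem_univ, true_and, mem_singleton]
    constructor
    · rintro ⟨hv, hodd⟩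
      by_contra hvu
      exact Nat.not_even_iff_odd.2 hodd (heven v hvu (by rintro rfl; exact hne hv))
    · rintro rfl
      exact ⟨SimpleGraph.Reachable.refl _, hu⟩
  have := (even_sum_iff_even_card_odd (s := D) (gdeg ends T)).1 (even_sum_gdeg_of_closed hclosed)
  rw [hodd, card_singleton] at this
  exact Nat.not_even_one this

end EdgeGraph

section CycleUnion

variable [Fintype V] [DecidableEq V] {ends : E → Sym2 V} {S : Finset E}

lemma card_filter_gdeg_eq_two (hS : ∀ v, gdeg ends S v = 0 ∨ gdeg ends S v = 2) :
    #{v | gdeg ends S v = 2} = #S := by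
  have h : ∑ v, gdeg ends S v = 2 * #{v | gdeg ends S v = 2} := by
    rw [← sum_filter_add_sum_filter_not univ (fun v => gdeg ends S v = 2),
      sum_congr rfl fun v hv => (mem_filter.1 hv).2,
      sum_eq_zero fun v hv => (hS v).resolve_right (mem_filter.1 hv).2]
    simp [mul_comm]
  have := sum_gdeg (ends := ends) S
  omega

lemma even_card_filter_gbdeg_eq_one (hS : ∀ v, gdeg ends S v = 0 ∨ gdeg ends S v = 2)
    (c : E → Bool) : Even #{v | gbdeg ends c S v = 1} := by
  have hsum : Even (∑ v, gbdeg ends c S v) := by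
    simp only [gbdeg_eq_gdeg_filter, sum_gdeg]
    exact even_two_mul _
  rw [even_sum_iff_even_card_odd] at hsum
  convert hsum using 3 with v
  have := gbdeg_le_gdeg (ends := ends) c S v
  have : gbdeg ends c S v = 0 ∨ gbdeg ends c S v = 1 ∨ gbdeg ends c S v = 2 := by
    rcases hS v with h | h <;> omega
  rcases this with h | h | h <;> simp [h]

lemma card_eq_four_and_altOn (hS : ∀ v, gdeg ends S v = 0 ∨ gdeg ends S v = 2)
    (hcard : #S ≤ 4) {c : E → Bool} (h3 : 2 < #{v | gbdeg ends c S v = 1}) :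
    #S = 4 ∧ AltOn ends c S := by
  have hsub : ({v | gbdeg ends c S v = 1} : Finset V) ⊆ ({v | gdeg ends S v = 2} : Finset V) := by
    intro v hv
    simp only [mem_filter, mem_univ, true_and] at hv ⊢
    have := gbdeg_le_gdeg (ends := ends) c S v
    rcases hS v with h | h <;> omega
  obtain ⟨k, hk⟩ := even_card_filter_gbdeg_eq_one hS c
  have hle := card_le_card hsub
  rw [card_filter_gdeg_eq_two hS] at hle
  have heq := eq_of_subset_of_card_le hsub (by rw [card_filter_gdeg_eq_two hS]; omega)
  refine ⟨by omega, fun v hv => ?_⟩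
  have hv' : v ∈ ({v | gdeg ends S v = 2} : Finset V) := by simpa using hv
  rw [← heq] at hv'
  simpa using hv'

lemma edgeGraph_white_reachable (hS : ∀ v, gdeg ends S v = 0 ∨ gdeg ends S v = 2)
    {c : E → Bool} {u x : V} (hux : u ≠ x) (hu : gbdeg ends c S u = 1)
    (hbdry : ∀ v, v ≠ u → v ≠ x → gbdeg ends c S v ≠ 1) :
    (edgeGraph ends (S.filter fun e => (!c e) = true)).Reachable u x := by
  have hwhite : ∀ v, gdeg ends (S.filter fun e => (!c e) = true) v + gbdeg ends c S v =
      gdeg ends S v := fun v => by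
    rw [← gbdeg_eq_gdeg_filter, add_comm]
    exact gbdeg_add_gbdeg_not c S v
  refine edgeGraph_reachable_of_odd hux ?_ fun v hvu hvx => ?_
  · rw [show gdeg ends (S.filter fun e => (!c e) = true) u = 1 by
      have := hwhite u
      rcases hS u with h | h <;> omega]
    exact odd_one
  · have := hwhite v
    have := hbdry v hvu hvx
    have := gbdeg_le_gdeg (ends := ends) c S v
    rcases (show gdeg ends (S.filter fun e => (!c e) = true) v = 0 ∨
        gdeg ends (S.filter fun e => (!c e) = true) v = 2 by
      rcases hS v with h | h <;> omega) with h | h <;> rw [h] <;> decide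

end CycleUnion

section Gyration

variable [DecidableEq V] {ends : E → Sym2 V} {cls : E → Finset E}
  {punct : Finset E → Bool} {c : E → Bool}

lemma altOn_not_iff {S : Finset E} : AltOn ends (fun e => !c e) S ↔ AltOn ends c S :=
  forall_congr' fun v => imp_congr_right fun _ => by
    have := gbdeg_add_gbdeg_not (ends := ends) c S v
    omega

lemma kept_not_iff {S : Finset E} : Kept ends punct (fun e => !c e) S ↔ Kept ends punct c S :=
  and_congr_right' altOn_not_iff

variable [Fintype V]

lemma gyr_not : gyr ends cls punct (fun e => !c e) = fun e => !gyr ends cls punct c e := by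
  funext e
  simp only [gyr]
  by_cases hk : Kept ends punct c (cls e)
  · rw [if_pos hk, if_pos (kept_not_iff.2 hk)]
  · rw [if_neg hk, if_neg (mt kept_not_iff.1 hk)]

variable (hcls : ∀ e e', e' ∈ cls e → cls e' = cls e)
include hcls

lemma gyr_of_kept {e e' : E} (he' : e' ∈ cls e) (hk : Kept ends punct c (cls e)) :
    gyr ends cls punct c e' = c e' := by
  simp only [gyr, hcls e e' he']
  exact if_pos hk

lemma gyr_of_not_kept {e e' : E} (he' : e' ∈ cls e) (hk : ¬ Kept ends punct c (cls e)) :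
    gyr ends cls punct c e' = !c e' := by
  simp only [gyr, hcls e e' he']
  exact if_neg hk

lemma gbdeg_gyr_eq_one_iff {e : E} {v : V} (h : gdeg ends (cls e) v = 2) :
    gbdeg ends (gyr ends cls punct c) (cls e) v = 1 ↔ gbdeg ends c (cls e) v = 1 := by
  by_cases hk : Kept ends punct c (cls e)
  · rw [gbdeg_congr fun e' he' => gyr_of_kept hcls he' hk]
  · rw [gbdeg_congr fun e' he' => gyr_of_not_kept hcls he' hk]
    have := gbdeg_add_gbdeg_not (ends := ends) c (cls e) v
    omega

lemma kept_gyr_iff {e : E} :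
    Kept ends punct (gyr ends cls punct c) (cls e) ↔ Kept ends punct c (cls e) :=
  and_congr_right' <| forall_congr' fun _ => imp_congr_right fun hv =>
    gbdeg_gyr_eq_one_iff hcls hv

lemma gyr_gyr (hmem : ∀ e, e ∈ cls e) : gyr ends cls punct (gyr ends cls punct c) = c := by
  funext e
  by_cases hk : Kept ends punct c (cls e)
  · rw [gyr_of_kept hcls (hmem e) ((kept_gyr_iff hcls).2 hk), gyr_of_kept hcls (hmem e) hk]
  · rw [gyr_of_not_kept hcls (hmem e) (mt (kept_gyr_iff hcls).1 hk),
      gyr_of_not_kept hcls (hmem e) hk, Bool.not_not]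

end Gyration

section AltAt

variable {ends : E → Sym2 V} {cls : E → Finset E} {punct : Finset E → Bool} {c : E → Bool}

lemma disjoint_cls (hcls : ∀ e e', e' ∈ cls e → cls e' = cls e) {e f : E} (h : cls e ≠ cls f) :
    Disjoint (cls e) (cls f) :=
  disjoint_left.2 fun _ hae haf => h ((hcls e _ hae).symm.trans (hcls f _ haf))

variable [DecidableEq V]

lemma altAt_not_iff {v : V} : AltAt ends cls (fun e => !c e) v ↔ AltAt ends cls c v :=
  forall_congr' fun e => imp_congr_right fun _ => by
    have := gbdeg_add_gbdeg_not (ends := ends) c (cls e) v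
    omega

lemma gdeg_cls_eq_two (hmem : ∀ e, e ∈ cls e)
    (hloc : ∀ e v, gdeg ends (cls e) v = 0 ∨ gdeg ends (cls e) v = 2) {e : E} {v : V}
    (he : 0 < emult ends e v) : gdeg ends (cls e) v = 2 :=
  (hloc e v).resolve_left (by have := emult_le_gdeg (ends := ends) (hmem e) v; omega)

lemma altAt_gyr_iff [Fintype V] (hcls : ∀ e e', e' ∈ cls e → cls e' = cls e) {v : V} :
    AltAt ends cls (gyr ends cls punct c) v ↔ AltAt ends cls c v :=
  forall_congr' fun _ => imp_congr_right fun hv => gbdeg_gyr_eq_one_iff hcls hv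

variable [Fintype E]

lemma bdeg_add_bdeg_not (v : V) : bdeg ends c v + bdeg ends (fun e => !c e) v = vdeg ends v :=
  gbdeg_add_gbdeg_not c univ v

lemma isFPL_not (hc : IsFPL ends c) : IsFPL ends (fun e => !c e) := fun v => by
  have := bdeg_add_bdeg_not (ends := ends) (c := c) v
  have := hc v
  constructor <;> intro hv <;> omega

variable [DecidableEq E]

lemma altAt_of_vdeg_eq_two (hc : IsFPL ends c) {v : V} (hv : vdeg ends v = 2) :
    AltAt ends cls c v := fun _ he =>
  (gbdeg_eq_bdeg_of_gdeg_eq_vdeg (he.trans hv.symm)).trans ((hc v).2 hv)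

variable (hmem : ∀ e, e ∈ cls e) (hcls : ∀ e e', e' ∈ cls e → cls e' = cls e)
  (hloc : ∀ e v, gdeg ends (cls e) v = 0 ∨ gdeg ends (cls e) v = 2)
  (hdeg : ∀ v, vdeg ends v = 2 ∨ vdeg ends v = 4) (hc : IsFPL ends c)

include hcls hdeg hc in
lemma gbdeg_ne_one_of_not_altAt {v : V} (hv : ¬ AltAt ends cls c v) {e : E}
    (he : gdeg ends (cls e) v = 2) : gbdeg ends c (cls e) v ≠ 1 := by
  obtain ⟨e₀, he₀, hne₀⟩ : ∃ e₀, gdeg ends (cls e₀) v = 2 ∧ gbdeg ends c (cls e₀) v ≠ 1 := by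
    simpa [AltAt] using hv
  by_cases h : cls e = cls e₀
  · rwa [h]
  have hdisj := disjoint_cls hcls h
  have hunion := gdeg_union (ends := ends) hdisj v
  have hv4 : vdeg ends v = 4 := by
    have := gdeg_le_vdeg (ends := ends) (cls e ∪ cls e₀) v
    rcases hdeg v with h | h <;> omega
  have hb := gbdeg_eq_bdeg_of_gdeg_eq_vdeg (c := c) (hunion.trans (by omega))
  rw [gbdeg_union c hdisj, (hc v).1 hv4] at hb
  have := gbdeg_le_gdeg (ends := ends) c (cls e₀) v
  omega

include hmem hcls hloc hdeg hc in
lemma cls_eq_of_not_altAt {v : V} (hv : ¬ AltAt ends cls c v) {f g : E}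
    (hf : c f = true) (hg : c g = true) (hfv : 0 < emult ends f v) (hgv : 0 < emult ends g v) :
    cls f = cls g := by
  by_contra h
  have hbf : 2 ≤ gbdeg ends c (cls f) v := by
    have := emult_le_gbdeg (ends := ends) (hmem f) hf v
    have := gbdeg_ne_one_of_not_altAt hcls hdeg hc hv (gdeg_cls_eq_two hmem hloc hfv)
    omega
  have hbg : 2 ≤ gbdeg ends c (cls g) v := by
    have := emult_le_gbdeg (ends := ends) (hmem g) hg v
    have := gbdeg_ne_one_of_not_altAt hcls hdeg hc hv (gdeg_cls_eq_two hmem hloc hgv)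
    omega
  have hle : gbdeg ends c (cls f ∪ cls g) v ≤ bdeg ends c v := sum_le_sum_of_subset (subset_univ _)
  rw [gbdeg_union c (disjoint_cls hcls h)] at hle
  have : bdeg ends c v ≤ 2 := by rcases hdeg v with h | h <;> simp [(hc v).1, (hc v).2, h]
  omega

variable [Fintype V]

include hmem hcls hloc hdeg hc in
lemma gyr_of_not_altAt {v : V} (hv : ¬ AltAt ends cls c v) {f : E} (hf : 0 < emult ends f v) :
    gyr ends cls punct c f = !c f := by
  have h2 := gdeg_cls_eq_two hmem hloc hf
  refine gyr_of_not_kept hcls (hmem f) fun ⟨_, halt⟩ => ?_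
  exact gbdeg_ne_one_of_not_altAt hcls hdeg hc hv h2 (halt v h2)

include hmem hcls hloc hdeg hc in
lemma monoGraph_adj_gyr_iff {v : V} (hv : ¬ AltAt ends cls c v) (b : Bool) (w : V) :
    (monoGraph ends c b).Adj v w ↔ (monoGraph ends (gyr ends cls punct c) (!b)).Adj v w := by
  refine and_congr_right fun _ => exists_congr fun e => and_congr_left fun hends => ?_
  rw [gyr_of_not_altAt hmem hcls hloc hdeg hc hv (emult_pos_left hends)]
  cases c e <;> cases b <;> simp

end AltAt

section Reachability

variable {ends : E → Sym2 V} {cls : E → Finset E} {punct : Finset E → Bool} {c : E → Bool}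
  (hmem : ∀ e, e ∈ cls e) (hcls : ∀ e e', e' ∈ cls e → cls e' = cls e)

lemma monoGraph_not (b : Bool) : monoGraph ends (fun e => !c e) b = monoGraph ends c (!b) := by
  ext v w
  refine and_congr_right fun _ => exists_congr fun e => and_congr_left fun _ => ?_
  cases h : c e <;> cases b <;> simp [h]

variable [DecidableEq V]

include hmem hcls in
/-- A monochromatic path between vertices of `X` splits at its vertices in `X` into segments
inside single cycles, provided the black edges at each vertex outside `X` lie in one cycle. -/
theorem reachable_of_reachable_in_cls {X : V → Prop} {H : SimpleGraph V}
    (hshare : ∀ x, ¬ X x → ∀ f g, c f = true → c g = true → 0 < emult ends f x →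
      0 < emult ends g x → cls f = cls g)
    (hcut : ∀ f u x, X u → X x →
      (edgeGraph ends ((cls f).filter fun e => c e = true)).Reachable u x → H.Reachable u x)
    {u w : V} (hu : X u) (hw : X w) (h : (monoGraph ends c true).Reachable u w) :
    H.Reachable u w := by
  let B f := edgeGraph ends ((cls f).filter fun e => c e = true)
  let P : V → Prop := fun y => (X y ∧ H.Reachable u y) ∨
    (¬ X y ∧ ∃ y', X y' ∧ H.Reachable u y' ∧ ∃ f, (B f).Reachable y' y)
  have hP : ∀ y' f z, X y' → H.Reachable u y' → (B f).Reachable y' z → P z := by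
    intro y' f z hy' huy' hr
    by_cases hz : X z
    · exact Or.inl ⟨hz, huy'.trans (hcut f y' z hy' hz hr)⟩
    · exact Or.inr ⟨hz, y', hy', huy', f, hr⟩
  have hstep : ∀ y z, P y → (monoGraph ends c true).Adj y z → P z := by
    rintro y z hy ⟨hyz, e, hce, hends⟩
    have hadj : (B e).Adj y z := edgeGraph_adj.2 ⟨hyz, e, mem_filter.2 ⟨hmem e, hce⟩, hends⟩
    rcases hy with ⟨hyX, huy⟩ | ⟨hyX, y', hy'X, huy', f, hr⟩
    · exact hP y e z hyX huy hadj.reachable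
    · obtain ⟨g, hg, hgy⟩ := exists_emult_pos_of_reachable hr (by rintro rfl; exact hyX hy'X)
      have hfe : cls f = cls e := (hcls f g (mem_filter.1 hg).1).symm.trans
        (hshare y hyX g e (mem_filter.1 hg).2 hce hgy (emult_pos_left hends))
      have hr' : (B e).Reachable y' y := by simpa only [B, hfe] using hr
      exact hP y' e z hy'X huy' (hr'.trans hadj.reachable)
  rw [SimpleGraph.reachable_iff_reflTransGen] at h
  have hPw : P w := by
    clear hw
    induction h with
    | refl => exact Or.inl ⟨hu, SimpleGraph.Reachable.refl u⟩
    | tail _ hadj ih => exact hstep _ _ ih hadj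
  rcases hPw with ⟨-, h⟩ | ⟨hwX, -⟩
  · exact h
  · exact absurd hw hwX

variable [Fintype V] (hlen : ∀ e, (cls e).card ≤ 4)
  (hloc : ∀ e v, gdeg ends (cls e) v = 0 ∨ gdeg ends (cls e) v = 2)

include hcls hlen hloc in
/-- On a complemented cycle the two ends of a black segment are the only vertices with exactly
one black edge of the cycle (three would make it an alternating 4-cycle, which is kept), so they
are joined through its formerly white edges. -/
lemma reachable_gyr_of_reachable_in_cls {f : E} {u x : V} (hu : AltAt ends cls c u)
    (hx : AltAt ends cls c x)
    (h : (edgeGraph ends ((cls f).filter fun e => c e = true)).Reachable u x) :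
    (monoGraph ends (gyr ends cls punct c) true).Reachable u x := by
  rcases eq_or_ne u x with rfl | hux
  · exact SimpleGraph.Reachable.refl u
  have hgdeg : ∀ {y z}, (edgeGraph ends ((cls f).filter fun e => c e = true)).Reachable z y →
      z ≠ y → gdeg ends (cls f) y = 2 := fun {y _} hr hzy => by
    obtain ⟨e, he, hpos⟩ := exists_emult_pos_of_reachable hr hzy
    have := emult_le_gdeg (ends := ends) (mem_filter.1 he).1 y
    exact (hloc f y).resolve_left (by omega)
  have hbu := hu f (hgdeg h.symm hux.symm)
  have hbx := hx f (hgdeg h hux)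
  by_cases hk : Kept ends punct c (cls f)
  · exact h.mono (edgeGraph_le_monoGraph fun e he =>
      (gyr_of_kept hcls (mem_filter.1 he).1 hk).trans (mem_filter.1 he).2)
  have hbdry : ∀ v, v ≠ u → v ≠ x → gbdeg ends c (cls f) v ≠ 1 := by
    intro v hvu hvx hv
    obtain ⟨h4, halt⟩ := card_eq_four_and_altOn (hloc f) (hlen f)
      (two_lt_card.2 ⟨u, by simpa, x, by simpa, v, by simpa, hux, hvu.symm, hvx.symm⟩)
    exact hk ⟨Or.inl h4, halt⟩
  exact (edgeGraph_white_reachable (hloc f) hux hbu hbdry).mono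
    (edgeGraph_le_monoGraph fun e he =>
      (gyr_of_not_kept hcls (mem_filter.1 he).1 hk).trans (mem_filter.1 he).2)

variable [Fintype E] [DecidableEq E] (hdeg : ∀ v, vdeg ends v = 2 ∨ vdeg ends v = 4)
  (hc : IsFPL ends c)

include hmem hcls hlen hloc hdeg hc in
theorem reachable_gyr_iff_black {u w : V} (hu : AltAt ends cls c u) (hw : AltAt ends cls c w) :
    (monoGraph ends c true).Reachable u w ↔
      (monoGraph ends (gyr ends cls punct c) true).Reachable u w := by
  constructor
  · exact reachable_of_reachable_in_cls hmem hcls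
      (fun x hx f g => cls_eq_of_not_altAt hmem hcls hloc hdeg hc hx)
      (fun f u x hu hx => reachable_gyr_of_reachable_in_cls hcls hlen hloc hu hx) hu hw
  · have hcut : ∀ f u x, AltAt ends cls c u → AltAt ends cls c x →
        (edgeGraph ends ((cls f).filter fun e => gyr ends cls punct c e = true)).Reachable u x →
        (monoGraph ends c true).Reachable u x := fun f u x hu hx hr => by
      have := reachable_gyr_of_reachable_in_cls (punct := punct) hcls hlen hloc
        ((altAt_gyr_iff hcls).2 hu) ((altAt_gyr_iff hcls).2 hx) hr
      rwa [gyr_gyr hcls hmem] at this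
    refine reachable_of_reachable_in_cls hmem hcls (fun x hx f g hf hg hfx hgx => ?_) hcut hu hw
    rw [gyr_of_not_altAt hmem hcls hloc hdeg hc hx hfx] at hf
    rw [gyr_of_not_altAt hmem hcls hloc hdeg hc hx hgx] at hg
    exact cls_eq_of_not_altAt hmem hcls hloc hdeg (isFPL_not hc) (mt altAt_not_iff.1 hx)
      hf hg hfx hgx

include hmem hcls hlen hloc hdeg hc in
theorem reachable_gyr_iff (b : Bool) {u w : V} (hu : AltAt ends cls c u)
    (hw : AltAt ends cls c w) :
    (monoGraph ends c b).Reachable u w ↔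
      (monoGraph ends (gyr ends cls punct c) b).Reachable u w := by
  cases b
  · have := reachable_gyr_iff_black (punct := punct) hmem hcls hlen hloc hdeg (isFPL_not hc)
      (altAt_not_iff.2 hu) (altAt_not_iff.2 hw)
    rwa [monoGraph_not, gyr_not, monoGraph_not] at this
  · exact reachable_gyr_iff_black hmem hcls hlen hloc hdeg hc hu hw

end Reachability

section Components

open SimpleGraph

variable {G H : SimpleGraph V} {X : Set V}

lemma reachable_iff_of_adj_iff (hA : ∀ x ∉ X, ∀ z, G.Adj x z ↔ H.Adj x z) {v : V}
    (hv : ∀ y, G.Reachable v y → y ∉ X) (y : V) : G.Reachable v y ↔ H.Reachable v y := by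
  simp only [reachable_iff_reflTransGen]
  constructor
  · intro h
    induction h with
    | refl => exact .refl
    | tail hvb hbc ih =>
      exact ih.tail ((hA _ (hv _ ((reachable_iff_reflTransGen _ _).2 hvb)) _).1 hbc)
  · intro h
    induction h with
    | refl => exact .refl
    | tail _ hbc ih =>
      exact ih.tail ((hA _ (hv _ ((reachable_iff_reflTransGen _ _).2 ih)) _).2 hbc)

lemma supp_image_disjoint_subset (hA : ∀ x ∉ X, ∀ z, G.Adj x z ↔ H.Adj x z) :
    ConnectedComponent.supp '' {C : G.ConnectedComponent | Disjoint C.supp X} ⊆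
      ConnectedComponent.supp '' {C : H.ConnectedComponent | Disjoint C.supp X} := by
  rintro _ ⟨C, hC, rfl⟩
  obtain ⟨v, rfl⟩ := C.exists_rep
  have hv : ∀ y, G.Reachable v y → y ∉ X := fun y hy =>
    Set.disjoint_left.1 hC (ConnectedComponent.sound hy.symm)
  have hsupp : (H.connectedComponentMk v).supp = (G.connectedComponentMk v).supp := by
    ext y
    simp only [ConnectedComponent.mem_supp_iff, ConnectedComponent.eq]
    rw [reachable_comm, ← reachable_iff_of_adj_iff hA hv, reachable_comm]
  refine ⟨H.connectedComponentMk v, ?_, hsupp⟩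
  show Disjoint _ X
  rw [hsupp]
  exact hC

lemma ncard_disjoint_eq (hA : ∀ x ∉ X, ∀ z, G.Adj x z ↔ H.Adj x z) :
    {C : G.ConnectedComponent | Disjoint C.supp X}.ncard =
      {C : H.ConnectedComponent | Disjoint C.supp X}.ncard := by
  rw [← Set.ncard_image_of_injective _ ConnectedComponent.supp_injective,
    ← Set.ncard_image_of_injective _ ConnectedComponent.supp_injective,
    (supp_image_disjoint_subset hA).antisymm
      (supp_image_disjoint_subset fun x hx z => (hA x hx z).symm)]

lemma injOn_supp_inter :
    Set.InjOn (fun C : G.ConnectedComponent => C.supp ∩ X) {C | (C.supp ∩ X).Nonempty} := by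
  rintro C ⟨x, hxC, hxX⟩ D - h
  have hxD : x ∈ D.supp ∩ X := by
    rw [← show C.supp ∩ X = D.supp ∩ X from h]
    exact ⟨hxC, hxX⟩
  exact hxC.symm.trans hxD.1

lemma supp_inter_image_subset (hR : ∀ u ∈ X, ∀ w ∈ X, G.Reachable u w ↔ H.Reachable u w) :
    (fun C : G.ConnectedComponent => C.supp ∩ X) '' {C | (C.supp ∩ X).Nonempty} ⊆
      (fun C : H.ConnectedComponent => C.supp ∩ X) '' {C | (C.supp ∩ X).Nonempty} := by
  rintro _ ⟨C, ⟨x, hxC, hxX⟩, rfl⟩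
  obtain rfl : G.connectedComponentMk x = C := hxC
  refine ⟨H.connectedComponentMk x, ⟨x, rfl, hxX⟩, ?_⟩
  ext y
  simp only [Set.mem_inter_iff, ConnectedComponent.mem_supp_iff, ConnectedComponent.eq]
  exact ⟨fun ⟨hy, hyX⟩ => ⟨(hR y hyX x hxX).2 hy, hyX⟩,
    fun ⟨hy, hyX⟩ => ⟨(hR y hyX x hxX).1 hy, hyX⟩⟩

lemma ncard_supp_inter_eq (hR : ∀ u ∈ X, ∀ w ∈ X, G.Reachable u w ↔ H.Reachable u w)
    (Q : Set V → Prop) :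
    {C : G.ConnectedComponent | (C.supp ∩ X).Nonempty ∧ Q (C.supp ∩ X)}.ncard =
      {C : H.ConnectedComponent | (C.supp ∩ X).Nonempty ∧ Q (C.supp ∩ X)}.ncard := by
  have key : ∀ K : SimpleGraph V,
      {C : K.ConnectedComponent | (C.supp ∩ X).Nonempty ∧ Q (C.supp ∩ X)}.ncard =
        ((fun C : K.ConnectedComponent => C.supp ∩ X) '' {C | (C.supp ∩ X).Nonempty} ∩
          {s | Q s}).ncard := fun K => by
    rw [← Set.image_inter_preimage, (injOn_supp_inter.mono Set.inter_subset_left).ncard_image]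
    rfl
  rw [key, key, (supp_inter_image_subset hR).antisymm
    (supp_inter_image_subset fun u hu w hw => (hR u hu w hw).symm)]

/-- Components meeting `X` are matched through their traces on `X`, and components avoiding
`X` are matched by their supports, across the swap. -/
theorem card_components_add_eq [Finite V] {G₁ G₂ H₁ H₂ : SimpleGraph V} {p : V → Prop}
    (hp : ∀ v, p v → v ∈ X)
    (hR₁ : ∀ u ∈ X, ∀ w ∈ X, G₁.Reachable u w ↔ H₁.Reachable u w)
    (hR₂ : ∀ u ∈ X, ∀ w ∈ X, G₂.Reachable u w ↔ H₂.Reachable u w)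
    (hA₁ : ∀ x ∉ X, ∀ z, G₁.Adj x z ↔ H₂.Adj x z) (hA₂ : ∀ x ∉ X, ∀ z, G₂.Adj x z ↔ H₁.Adj x z) :
    Nat.card {C : G₁.ConnectedComponent // ∀ v ∈ C.supp, ¬ p v} +
        Nat.card {C : G₂.ConnectedComponent // ∀ v ∈ C.supp, ¬ p v} =
      Nat.card {C : H₁.ConnectedComponent // ∀ v ∈ C.supp, ¬ p v} +
        Nat.card {C : H₂.ConnectedComponent // ∀ v ∈ C.supp, ¬ p v} := by
  have split : ∀ K : SimpleGraph V, Nat.card {C : K.ConnectedComponent // ∀ v ∈ C.supp, ¬ p v} =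
      {C : K.ConnectedComponent | (C.supp ∩ X).Nonempty ∧ ∀ v ∈ C.supp ∩ X, ¬ p v}.ncard +
        {C : K.ConnectedComponent | Disjoint C.supp X}.ncard := fun K => by
    have hset : {C : K.ConnectedComponent | ∀ v ∈ C.supp, ¬ p v} =
        {C | (C.supp ∩ X).Nonempty ∧ ∀ v ∈ C.supp ∩ X, ¬ p v} ∪ {C | Disjoint C.supp X} := by
      ext C
      simp only [Set.mem_union]
      constructor
      · intro h
        by_cases hm : (C.supp ∩ X).Nonempty
        · exact Or.inl ⟨hm, fun v hv => h v hv.1⟩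
        · exact Or.inr (Set.disjoint_iff_inter_eq_empty.2 (Set.not_nonempty_iff_eq_empty.1 hm))
      · rintro (⟨-, h⟩ | h) v hv hpv
        · exact h v ⟨hv, hp v hpv⟩ hpv
        · exact Set.disjoint_left.1 h hv (hp v hpv)
    have hdisj : Disjoint {C : K.ConnectedComponent | (C.supp ∩ X).Nonempty ∧
        ∀ v ∈ C.supp ∩ X, ¬ p v} {C | Disjoint C.supp X} :=
      Set.disjoint_left.2 fun C hC hd => Set.not_disjoint_iff_nonempty_inter.2 hC.1 hd
    rw [← Set.ncard_union_eq hdisj, ← hset]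
    rfl
  rw [split, split, split, split, ncard_supp_inter_eq hR₁ (fun s => ∀ v ∈ s, ¬ p v),
    ncard_supp_inter_eq hR₂ (fun s => ∀ v ∈ s, ¬ p v),
    ncard_disjoint_eq hA₁, ncard_disjoint_eq hA₂]
  ring

end Components

end

/-- **Gyration preserves monochromatic connectivity and the number of loops.**
If two degree-2 vertices are endpoints of a black (resp. white) path in `φ`,
then they are endpoints of a black (resp. white) path in `H_Γ(φ)`; hence `H_Γ`
preserves the black and white endpoint pairings `(π_b, π_w)`, and it preserves
the total number `ℓ = ℓ_b + ℓ_w` of monochromatic cycles. -/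
theorem gyration_preserves_connectivity (ends : E → Sym2 V) (cls : E → Finset E)
    (punct : Finset E → Bool)
    (hmem : ∀ e, e ∈ cls e)
    (hcls : ∀ e e', e' ∈ cls e → cls e' = cls e)
    (hlen : ∀ e, (cls e).card ≤ 4)
    (hloc : ∀ e v, gdeg ends (cls e) v = 0 ∨ gdeg ends (cls e) v = 2)
    (hdeg : ∀ v, vdeg ends v = 2 ∨ vdeg ends v = 4)
    (c : E → Bool) (hc : IsFPL ends c) :
    (∀ v w : V, vdeg ends v = 2 → vdeg ends w = 2 → ∀ b : Bool,
        ((monoGraph ends c b).Reachable v w ↔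
          (monoGraph ends (gyr ends cls punct c) b).Reachable v w)) ∧
      cycCount ends c true + cycCount ends c false =
        cycCount ends (gyr ends cls punct c) true +
          cycCount ends (gyr ends cls punct c) false := by
  have hX : ∀ v, vdeg ends v = 2 → v ∈ {v | AltAt ends cls c v} :=
    fun v => altAt_of_vdeg_eq_two hc
  have hreach (b : Bool) : ∀ u ∈ {v | AltAt ends cls c v}, ∀ w ∈ {v | AltAt ends cls c v},
      ((monoGraph ends c b).Reachable u w ↔
        (monoGraph ends (gyr ends cls punct c) b).Reachable u w) :=
    fun u hu w hw => reachable_gyr_iff hmem hcls hlen hloc hdeg hc b hu hw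
  have hswap (b : Bool) : ∀ x ∉ {v | AltAt ends cls c v}, ∀ z,
      ((monoGraph ends c b).Adj x z ↔ (monoGraph ends (gyr ends cls punct c) (!b)).Adj x z) :=
    fun x hx => monoGraph_adj_gyr_iff hmem hcls hloc hdeg hc hx b
  exact ⟨fun v w hv hw b => hreach b v (hX v hv) w (hX w hw),
    card_components_add_eq hX (hreach true) (hreach false) (hswap true) (hswap false)⟩
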